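/- arXiv:2108.05181 — 10 statements merged into one kernel-verified Lean document; each statement's English description precedes it below -/
import Mathlib

section
/- With s_0 and s_1 as defined, for 1 ≤ k < n one has the recursion s_1(k,n) = (1-p_k) s_1(k+1,n) + p_k s_0(k+1,n), and consequently s_1(k,n) - s_1(k+1,n) = p_k s_0(k+1,n) (1 - Σ_{i=k+1}^n p_i/(1-p_i)). -/
open Finset

/-- `s₀(k,n) = ∏_{m=k}^n (1 - p m)`, probability of no success in trials `k,…,n`. -/
noncomputable def s0 (p : ℕ → ℝ) (k n : ℕ) : ℝ := ∏ m ∈ Finset.Icc k n, (1 - p m)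

/-- `s₁(k,n) = s₀(k,n) * ∑_{i=k}^n p i/(1-p i)`, probability of exactly one success. -/
noncomputable def s1 (p : ℕ → ℝ) (k n : ℕ) : ℝ :=
  s0 p k n * ∑ i ∈ Finset.Icc k n, p i / (1 - p i)

/-- the recursion `s₁(k,n) = (1-p k) s₁(k+1,n) + p k s₀(k+1,n)` and the
consequent formula for the difference `s₁(k,n) - s₁(k+1,n)`. -/
theorem s1_recursion (p : ℕ → ℝ) (k n : ℕ) (hk : 1 ≤ k) (hkn : k < n)
    (hp : ∀ i, 0 ≤ p i ∧ p i < 1) :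
    s1 p k n = (1 - p k) * s1 p (k + 1) n + p k * s0 p (k + 1) n ∧
    s1 p k n - s1 p (k + 1) n
      = p k * s0 p (k + 1) n * (1 - ∑ i ∈ Finset.Icc (k + 1) n, p i / (1 - p i)) := by
  have hne : (1 : ℝ) - p k ≠ 0 := by linarith [(hp k).2]
  have hmem : k ∉ Finset.Icc (k + 1) n := by simp
  have hins : Finset.Icc k n = insert k (Finset.Icc (k + 1) n) := by
    ext x; simp [Finset.mem_Icc]; omega
  have hs0 : s0 p k n = (1 - p k) * s0 p (k + 1) n := by
    rw [s0, s0, hins, Finset.prod_insert hmem]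
  have hsum : ∑ i ∈ Finset.Icc k n, p i / (1 - p i)
      = p k / (1 - p k) + ∑ i ∈ Finset.Icc (k + 1) n, p i / (1 - p i) := by
    rw [hins, Finset.sum_insert hmem]
  have h1 : s1 p k n = (1 - p k) * s1 p (k + 1) n + p k * s0 p (k + 1) n := by
    rw [s1, s1, hs0, hsum]
    field_simp
    ring
  refine ⟨h1, ?_⟩
  rw [h1, s1]
  ring
end

section
/- The sequence k ↦ s_1(k+1,n), for 0 ≤ k ≤ n, is unimodal: the difference s_1(k,n) - s_1(k+1,n) changes sign at most once as k increases, from nonnegative to nonpositive. Equivalently, since s_1(k,n)-s_1(k+1,n) has the same sign as 1 - Σ_{i=k+1}^n p_i/(1-p_i), which is nondecreasing in k, the sequence increases and then decreases. -/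
open Finset

lemma s0_pos (p : ℕ → ℝ) (hp : ∀ i, 0 ≤ p i ∧ p i < 1) (k n : ℕ) : 0 < s0 p k n :=
  Finset.prod_pos fun i _ => by linarith [(hp i).2]

lemma s1_diff (p : ℕ → ℝ) (n : ℕ) (hp : ∀ i, 0 ≤ p i ∧ p i < 1) (k : ℕ) (hk : k ≤ n) :
    s1 p k n - s1 p (k + 1) n
      = s0 p (k + 1) n * p k * (1 - ∑ i ∈ Finset.Icc (k + 1) n, p i / (1 - p i)) := by
  have hpk : (0:ℝ) < 1 - p k := by linarith [(hp k).2]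
  have hIcc : Finset.Icc k n = insert k (Finset.Ioc k n) := (Finset.Ioc_insert_left hk).symm
  have hIcc' : Finset.Icc (k + 1) n = Finset.Ioc k n := Finset.Icc_add_one_left_eq_Ioc k n
  have hnm : k ∉ Finset.Ioc k n := Finset.left_notMem_Ioc
  unfold s1 s0
  rw [hIcc', hIcc, Finset.prod_insert hnm, Finset.sum_insert hnm]
  field_simp
  ring

/-- the sequence `k ↦ s₁(k+1,n)` for `0 ≤ k ≤ n` is unimodal: there is a
mode `k* ≤ n` such that the sequence is nondecreasing up to `k*` and nonincreasing
afterwards. -/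
theorem s1_unimodal (p : ℕ → ℝ) (n : ℕ) (hp : ∀ i, 0 ≤ p i ∧ p i < 1) :
    ∃ kstar ≤ n,
      (∀ k < kstar, s1 p (k + 1) n ≤ s1 p (k + 2) n) ∧
      (∀ k, kstar ≤ k → k < n → s1 p (k + 2) n ≤ s1 p (k + 1) n) := by
  classical
  set T : ℕ → ℝ := fun k => ∑ i ∈ Finset.Icc k n, p i / (1 - p i) with hTdef
  have hq : ∀ i, 0 ≤ p i / (1 - p i) := fun i =>
    div_nonneg (hp i).1 (by linarith [(hp i).2])
  have hmono : ∀ j k, j ≤ k → T k ≤ T j := fun j k h =>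
    Finset.sum_le_sum_of_subset_of_nonneg (Finset.Icc_subset_Icc_left h)
      (fun i _ _ => hq i)
  have hempty : T (n + 2) = 0 := by
    simp [hTdef, Finset.Icc_eq_empty (by omega : ¬ n + 2 ≤ n)]
  have hex : ∃ k, T (k + 2) ≤ 1 := ⟨n, by rw [hempty]; norm_num⟩
  refine ⟨Nat.find hex, Nat.find_le (by rw [hempty]; norm_num), ?_, ?_⟩
  · intro k hk
    have h1 : ¬ T (k + 2) ≤ 1 := Nat.find_min hex hk
    have hkn : k + 1 ≤ n := by
      have h2 : Nat.find hex ≤ n := Nat.find_le (by rw [hempty]; norm_num)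
      omega
    have hd := s1_diff p n hp (k + 1) hkn
    have hs := s0_pos p hp (k + 2) n
    have : s0 p (k + 2) n * p (k + 1) * (1 - T (k + 2)) ≤ 0 :=
      mul_nonpos_of_nonneg_of_nonpos (mul_nonneg hs.le (hp (k + 1)).1) (by push_neg at h1; linarith)
    linarith [hd]
  · intro k hk hkn
    have hTk : T (k + 2) ≤ 1 :=
      le_trans (hmono (Nat.find hex + 2) (k + 2) (by omega)) (Nat.find_spec hex)
    have hd := s1_diff p n hp (k + 1) (by omega)
    have hs := s0_pos p hp (k + 2) n
    have : 0 ≤ s0 p (k + 2) n * p (k + 1) * (1 - T (k + 2)) :=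
      mul_nonneg (mul_nonneg hs.le (hp (k + 1)).1) (by linarith)
    linarith [hd]
end

section
/- If p_{k+1} ≥ p_{n+1} and Σ_{i=k+2}^n p_i/(1-p_i) ≤ 1, then the quantity p_{k+1} s_0(k+2,n)(1-p_{n+1}) + (1-p_{k+1}) s_1(k+2,n) p_{n+1} - p_{k+1} s_1(k+2,n)(1-p_{n+1}) - (1-p_{k+1}) s_0(k+2,n) p_{n+1} equals (1 - Σ_{i=k+2}^n p_i/(1-p_i)) (p_{k+1} - p_{n+1}), and in particular is nonnegative. -/
open Finset

/-- if `p_{k+1} ≥ p_{n+1}` and `∑_{i=k+2}^n p_i/(1-p_i) ≤ 1`, then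
`p_{k+1} s₀(k+2,n)(1-p_{n+1}) + (1-p_{k+1}) s₁(k+2,n) p_{n+1}
 - p_{k+1} s₁(k+2,n)(1-p_{n+1}) - (1-p_{k+1}) s₀(k+2,n) p_{n+1}
 = s₀(k+2,n) (1 - ∑_{i=k+2}^n p_i/(1-p_i)) (p_{k+1} - p_{n+1}) ≥ 0`. -/
theorem compare_shifted (p : ℕ → ℝ) (k n : ℕ)
    (hp : ∀ i, 0 ≤ p i ∧ p i < 1)
    (hpk : p (n + 1) ≤ p (k + 1))
    (hsum : ∑ i ∈ Finset.Icc (k + 2) n, p i / (1 - p i) ≤ 1) :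
    p (k + 1) * s0 p (k + 2) n * (1 - p (n + 1))
      + (1 - p (k + 1)) * s1 p (k + 2) n * p (n + 1)
      - p (k + 1) * s1 p (k + 2) n * (1 - p (n + 1))
      - (1 - p (k + 1)) * s0 p (k + 2) n * p (n + 1)
    = s0 p (k + 2) n * (1 - ∑ i ∈ Finset.Icc (k + 2) n, p i / (1 - p i))
        * (p (k + 1) - p (n + 1))
    ∧ 0 ≤ p (k + 1) * s0 p (k + 2) n * (1 - p (n + 1))
      + (1 - p (k + 1)) * s1 p (k + 2) n * p (n + 1)
      - p (k + 1) * s1 p (k + 2) n * (1 - p (n + 1))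
      - (1 - p (k + 1)) * s0 p (k + 2) n * p (n + 1) := by
  have heq : p (k + 1) * s0 p (k + 2) n * (1 - p (n + 1))
      + (1 - p (k + 1)) * s1 p (k + 2) n * p (n + 1)
      - p (k + 1) * s1 p (k + 2) n * (1 - p (n + 1))
      - (1 - p (k + 1)) * s0 p (k + 2) n * p (n + 1)
    = s0 p (k + 2) n * (1 - ∑ i ∈ Finset.Icc (k + 2) n, p i / (1 - p i))
        * (p (k + 1) - p (n + 1)) := by
    unfold s1; ring
  refine ⟨heq, ?_⟩
  rw [heq]
  have hs0 : 0 ≤ s0 p (k + 2) n :=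
    Finset.prod_nonneg fun m _ => by linarith [(hp m).2]
  have := sub_nonneg.2 hsum
  have := sub_nonneg.2 hpk
  positivity
end

section
/- For the profile p_k = 1/k, the derivative in z of S_1(0,n;z) = Σ_{k=0}^{n} C(n,k) z^k (1-z)^{n-k} s_1(k+1,n) equals -Σ_{k=1}^n C(n-1,k-1) n z^{k-1} (1-z)^{n-k} p_k (s_0(k+1,n) - s_1(k+1,n)); more generally this derivative identity D_z S_1(0,n;z) = Σ_{k=1}^n C(n-1,k-1) n z^{k-1}(1-z)^{n-k} p_k (s_1(k+1,n) - s_0(k+1,n)) holds for any profile (p_k) with p_k ∈ [0,1). -/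
open Finset

/-!
`S₁(0,n;·)` is the Bernstein combination `∑ₖ aₖ b_{n,k}` with `aₖ = s₁(k+1,n)`. Since
`b_{n,k}' = n (b_{n-1,k-1} - b_{n-1,k})`, summation by parts gives the derivative
`n ∑ₖ (aₖ - a_{k-1}) b_{n-1,k-1}`, and the recursion
`s₁(k,n) = (1-pₖ) s₁(k+1,n) + pₖ s₀(k+1,n)` turns each difference `aₖ - a_{k-1}` into
`pₖ (s₁(k+1,n) - s₀(k+1,n))`.
-/

open Polynomial in
theorem bernsteinPolynomial.derivative_sum_smul {R : Type*} [CommRing R] (n : ℕ) (a : ℕ → R) :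
    derivative (∑ k ∈ range (n + 1), a k • bernsteinPolynomial R n k) =
      (n : R[X]) * ∑ k ∈ range n, (a (k + 1) - a k) • bernsteinPolynomial R (n - 1) k := by
  rcases n with _ | m
  · simp [bernsteinPolynomial]
  have hvanish : bernsteinPolynomial R m (m + 1) = 0 := eq_zero_of_lt R m.lt_succ_self
  have hshift := sum_range_succ' (fun k => a k • bernsteinPolynomial R m k) (m + 1)
  rw [sum_range_succ, hvanish, smul_zero, add_zero] at hshift
  rw [derivative_sum, sum_range_succ']
  simp only [derivative_smul, derivative_succ, derivative_zero, Nat.add_sub_cancel]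
  simp only [smul_eq_C_mul, map_sub, mul_sub, sub_mul, sum_sub_distrib,
    mul_left_comm _ ((m + 1 : ℕ) : R[X]), ← mul_sum] at hshift ⊢
  linear_combination ((m + 1 : ℕ) : R[X]) * hshift

open Polynomial in
theorem hasDerivAt_bernstein_sum (n : ℕ) (a : ℕ → ℝ) (z : ℝ) :
    HasDerivAt
      (fun w : ℝ => ∑ k ∈ range (n + 1), (n.choose k : ℝ) * w ^ k * (1 - w) ^ (n - k) * a k)
      (∑ k ∈ Icc 1 n,
        ((n - 1).choose (k - 1) : ℝ) * n * z ^ (k - 1) * (1 - z) ^ (n - k) * (a k - a (k - 1))) z := by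
  set P := ∑ k ∈ range (n + 1), a k • bernsteinPolynomial ℝ n k
  have hP : ∀ w, P.eval w =
      ∑ k ∈ range (n + 1), (n.choose k : ℝ) * w ^ k * (1 - w) ^ (n - k) * a k := fun w => by
    simp only [P, eval_finsetSum, eval_smul, bernsteinPolynomial, eval_mul, eval_pow, eval_sub,
      eval_one, eval_X, eval_natCast, smul_eq_mul]
    exact sum_congr rfl fun k _ => mul_comm _ _
  have hP' : P.derivative.eval z = ∑ k ∈ Icc 1 n,
      ((n - 1).choose (k - 1) : ℝ) * n * z ^ (k - 1) * (1 - z) ^ (n - k) * (a k - a (k - 1)) := by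
    rw [bernsteinPolynomial.derivative_sum_smul, ← Ico_add_one_right_eq_Icc, sum_Ico_eq_sum_range]
    simp only [eval_mul, eval_natCast, eval_finsetSum, eval_smul, bernsteinPolynomial, eval_pow,
      eval_sub, eval_one, eval_X, smul_eq_mul, mul_sum, Nat.add_sub_cancel]
    refine sum_congr rfl fun k _ => ?_
    rw [add_comm 1 k, Nat.add_sub_cancel, Nat.sub_sub, add_comm 1 k]
    ring
  simpa only [hP, hP'] using P.hasDerivAt z

theorem s1_eq_mul_s1_succ_add_mul_s0_succ {p : ℕ → ℝ} {k n : ℕ} (hk : k ≤ n) (hpk : p k ≠ 1) :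
    s1 p k n = (1 - p k) * s1 p (k + 1) n + p k * s0 p (k + 1) n := by
  have hIcc : Icc k n = insert k (Icc (k + 1) n) := (insert_Icc_succ_left_eq_Icc hk).symm
  have hnotMem : k ∉ Icc (k + 1) n := by simp
  have hk' : 1 - p k ≠ 0 := sub_ne_zero.mpr hpk.symm
  simp only [s1, s0, hIcc, prod_insert hnotMem, sum_insert hnotMem]
  field_simp
  ring

theorem bernstein_deriv_general (p : ℕ → ℝ) (n : ℕ)
    (hp : ∀ i, 0 ≤ p i ∧ p i < 1) (z : ℝ) :
    HasDerivAt
      (fun w : ℝ => ∑ k ∈ Finset.range (n + 1),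
        (n.choose k : ℝ) * w ^ k * (1 - w) ^ (n - k) * s1 p (k + 1) n)
      (∑ k ∈ Finset.Icc 1 n,
        ((n - 1).choose (k - 1) : ℝ) * n * z ^ (k - 1) * (1 - z) ^ (n - k) *
          p k * (s1 p (k + 1) n - s0 p (k + 1) n)) z := by
  refine (hasDerivAt_bernstein_sum n (fun k => s1 p (k + 1) n) z).congr_deriv
    (sum_congr rfl fun k hk => ?_)
  obtain ⟨hk1, hkn⟩ := mem_Icc.mp hk
  rw [Nat.sub_add_cancel hk1, s1_eq_mul_s1_succ_add_mul_s0_succ hkn (hp k).2.ne]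
  ring

/-- for any profile with `p_k ∈ [0,1)`, the Bernstein polynomial
`S₁(0,n;z) = ∑_{k=0}^n C(n,k) z^k (1-z)^{n-k} s₁(k+1,n)` has derivative
`∑_{k=1}^n C(n-1,k-1) n z^{k-1} (1-z)^{n-k} p_k (s₁(k+1,n) - s₀(k+1,n))` in `z`. -/
theorem bernstein_deriv (p : ℕ → ℝ) (n : ℕ) (hn : 1 ≤ n)
    (hp : ∀ i, 0 ≤ p i ∧ p i < 1) (z : ℝ) :
    HasDerivAt
      (fun w : ℝ => ∑ k ∈ Finset.range (n + 1),
        (n.choose k : ℝ) * w ^ k * (1 - w) ^ (n - k) * s1 p (k + 1) n)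
      (∑ k ∈ Finset.Icc 1 n,
        ((n - 1).choose (k - 1) : ℝ) * n * z ^ (k - 1) * (1 - z) ^ (n - k) *
          p k * (s1 p (k + 1) n - s0 p (k + 1) n)) z :=
  bernstein_deriv_general p n hp z
end

section
/- For the Karamata–Stirling profile p_k = θ/(θ+k-1) with θ > 0, the second difference of s_1(·,n) at k, which equals (p_k - 2 p_k p_{k+1} - p_{k+1}) + (p_k p_{k+1} - p_k + p_{k+1}) Σ_{j=k+2}^n p_j/(1-p_j), is nonpositive for all 1 ≤ k ≤ n-2 and all n if and only if 1/2 ≤ θ ≤ 1. -/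
set_option maxHeartbeats 1000000

open Finset

/-- Karamata–Stirling profile `p_k = θ/(θ+k-1)`. -/
noncomputable def ksp (θ : ℝ) (k : ℕ) : ℝ := θ / (θ + k - 1)

lemma ksp_ratio (θ : ℝ) (hθ : 0 < θ) {j : ℕ} (hj : 2 ≤ j) :
    ksp θ j / (1 - ksp θ j) = θ / ((j : ℝ) - 1) := by
  have hj1 : (2 : ℝ) ≤ (j : ℝ) := by exact_mod_cast hj
  have hd : (0 : ℝ) < θ + j - 1 := by linarith
  have hd2 : (0 : ℝ) < (j : ℝ) - 1 := by linarith
  unfold ksp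
  have h : 1 - θ / (θ + (j : ℝ) - 1) = ((j : ℝ) - 1) / (θ + (j : ℝ) - 1) := by
    field_simp [hd.ne']
    ring
  rw [h]
  field_simp

lemma sum_ratio (θ : ℝ) (hθ : 0 < θ) (k n : ℕ) (hk : 1 ≤ k) :
    ∑ j ∈ Finset.Icc (k + 2) n, ksp θ j / (1 - ksp θ j)
      = θ * ∑ j ∈ Finset.Icc (k + 2) n, 1 / ((j : ℝ) - 1) := by
  rw [Finset.mul_sum]
  refine Finset.sum_congr rfl fun j hj => ?_
  have hj2 : 2 ≤ j := by
    have := (Finset.mem_Icc.mp hj).1; omega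
  rw [ksp_ratio θ hθ hj2, div_eq_mul_one_div]

lemma sum_inv_eq (m : ℕ) :
    ∑ j ∈ Finset.Icc 3 (m + 2), (1 : ℝ) / ((j : ℝ) - 1)
      = (∑ i ∈ Finset.range (m + 1), (1 : ℝ) / ((i : ℝ) + 1)) - 1 := by
  induction m with
  | zero => simp
  | succ m ih =>
    have h1 : m + 1 + 2 = (m + 2) + 1 := by omega
    rw [h1, Finset.sum_Icc_succ_top (by omega), ih,
      Finset.sum_range_succ (fun i => (1 : ℝ) / ((i : ℝ) + 1)) (m + 1)]
    push_cast
    ring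

/-- for `θ > 0`, the second-difference expression
`(p_k - 2p_k p_{k+1} - p_{k+1}) + (p_k p_{k+1} - p_k + p_{k+1}) ∑_{j=k+2}^n p_j/(1-p_j)`
is nonpositive for all `n` and all `1 ≤ k ≤ n-2` if and only if `1/2 ≤ θ ≤ 1`. -/
theorem ks_concavity_iff (θ : ℝ) (hθ : 0 < θ) :
    (∀ n k : ℕ, 1 ≤ k → k + 2 ≤ n →
      (ksp θ k - 2 * ksp θ k * ksp θ (k + 1) - ksp θ (k + 1))
        + (ksp θ k * ksp θ (k + 1) - ksp θ k + ksp θ (k + 1)) *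
            ∑ j ∈ Finset.Icc (k + 2) n, ksp θ j / (1 - ksp θ j) ≤ 0)
    ↔ (1 / 2 ≤ θ ∧ θ ≤ 1) := by
  constructor
  · intro H
    constructor
    · -- 1/2 ≤ θ
      by_contra hlt
      push_neg at hlt
      have hpos : 0 < θ * (1 - θ) / (1 - 2 * θ) := by
        apply div_pos
        · nlinarith
        · linarith
      obtain ⟨k, hk⟩ := exists_nat_gt (θ * (1 - θ) / (1 - 2 * θ))
      have hk1 : 1 ≤ k := by
        rcases Nat.eq_zero_or_pos k with rfl | h
        · exfalso; simp at hk; linarith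
        · exact h
      have h1 := H (k + 2) k hk1 le_rfl
      rw [Finset.Icc_self, Finset.sum_singleton, ksp_ratio θ hθ (by omega)] at h1
      have hkR : (1 : ℝ) ≤ (k : ℝ) := by exact_mod_cast hk1
      have hu : (0 : ℝ) < θ + k - 1 := by linarith
      have hv : (0 : ℝ) < θ + k := by linarith
      have hw : (0 : ℝ) < (k : ℝ) + 1 := by positivity
      have key : ksp θ k - 2 * ksp θ k * ksp θ (k + 1) - ksp θ (k + 1)
          + (ksp θ k * ksp θ (k + 1) - ksp θ k + ksp θ (k + 1)) *
              (θ / ((↑(k + 2) : ℝ) - 1))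
          = θ * ((1 - 2 * θ) * ((k : ℝ) + 1) + θ * (θ - 1))
              / ((θ + k - 1) * (θ + k) * ((k : ℝ) + 1)) := by
        unfold ksp
        push_cast
        have he : θ + ((k : ℝ) + 1) - 1 = θ + k := by ring
        rw [he]
        have hw' : ((k : ℝ) + 2 - 1) ≠ 0 := by linarith
        field_simp [hu.ne', hv.ne', hw.ne', hw']
        ring
      rw [key] at h1
      have hden : (0 : ℝ) < (θ + k - 1) * (θ + k) * ((k : ℝ) + 1) := by positivity
      have hnum : θ * ((1 - 2 * θ) * ((k : ℝ) + 1) + θ * (θ - 1)) ≤ 0 := by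
        by_contra hc
        push_neg at hc
        nlinarith [div_pos hc hden]
      have hkgt : θ * (1 - θ) / (1 - 2 * θ) < (k : ℝ) := hk
      have h2θ : 0 < 1 - 2 * θ := by linarith
      have : θ * (1 - θ) < (1 - 2 * θ) * (k : ℝ) := by
        rw [div_lt_iff₀ h2θ] at hkgt
        linarith
      nlinarith
    · -- θ ≤ 1
      by_contra hgt
      push_neg at hgt
      have hdiv := Real.tendsto_sum_range_one_div_nat_succ_atTop
      set C : ℝ := (2 * θ - 1) / (θ * (θ - 1)) with hC
      obtain ⟨m, hm, hm1⟩ := ((hdiv.eventually_gt_atTop (C + 1)).and (Filter.eventually_ge_atTop 1)).exists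
      have hmono : ∑ i ∈ Finset.range m, (1 : ℝ) / ((i : ℝ) + 1)
          ≤ ∑ i ∈ Finset.range (m + 1), (1 : ℝ) / ((i : ℝ) + 1) := by
        rw [Finset.sum_range_succ]
        have : (0:ℝ) ≤ 1 / ((m : ℝ) + 1) := by positivity
        linarith
      have hbig : C + 1 < ∑ i ∈ Finset.range (m + 1), (1 : ℝ) / ((i : ℝ) + 1) := by
        refine lt_of_lt_of_le ?_ hmono
        simpa using hm
      have hT : C < ∑ j ∈ Finset.Icc 3 (m + 2), (1 : ℝ) / ((j : ℝ) - 1) := by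
        rw [sum_inv_eq]
        linarith
      have h1 := H (m + 2) 1 le_rfl (by omega)
      rw [sum_ratio θ hθ 1 (m + 2) le_rfl] at h1
      set T : ℝ := ∑ j ∈ Finset.Icc 3 (m + 2), (1 : ℝ) / ((j : ℝ) - 1) with hTdef
      have hv : (0 : ℝ) < θ + 1 := by linarith
      have hkey : ksp θ 1 - 2 * ksp θ 1 * ksp θ 2 - ksp θ 2
          + (ksp θ 1 * ksp θ 2 - ksp θ 1 + ksp θ 2) * (θ * T)
          = θ * ((1 - 2 * θ) + θ * (θ - 1) * T) / (θ * (θ + 1)) := by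
        unfold ksp
        push_cast
        rw [show θ + (1:ℝ) - 1 = θ by ring, show θ + (2:ℝ) - 1 = θ + 1 by ring]
        field_simp [hθ.ne', hv.ne']
        ring
      have h1' : θ * ((1 - 2 * θ) + θ * (θ - 1) * T) / (θ * (θ + 1)) ≤ 0 := by
        rw [← hkey]
        convert h1 using 5 <;> norm_num
      have hden : (0:ℝ) < θ * (θ + 1) := by positivity
      have hnum : θ * ((1 - 2 * θ) + θ * (θ - 1) * T) ≤ 0 := by
        by_contra hc
        push_neg at hc
        nlinarith [div_pos hc hden]
      have h3 : (1 - 2 * θ) + θ * (θ - 1) * T ≤ 0 := by nlinarith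
      have hθθ : 0 < θ * (θ - 1) := by nlinarith
      have hCT : C < T := hT
      have : 2 * θ - 1 < θ * (θ - 1) * T := by
        rw [hC] at hCT
        rw [div_lt_iff₀ hθθ] at hCT
        linarith
      linarith
  · rintro ⟨hh1, hh2⟩ n k hk hn
    have hkR : (1 : ℝ) ≤ (k : ℝ) := by exact_mod_cast hk
    have hu : (0 : ℝ) < θ + k - 1 := by linarith
    have hv : (0 : ℝ) < θ + k := by linarith
    have hA : ksp θ k - 2 * ksp θ k * ksp θ (k + 1) - ksp θ (k + 1)
        = θ * (1 - 2 * θ) / ((θ + k - 1) * (θ + k)) := by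
      unfold ksp
      push_cast
      rw [show θ + ((k : ℝ) + 1) - 1 = θ + k by ring]
      field_simp [hu.ne', hv.ne']
      ring
    have hB : ksp θ k * ksp θ (k + 1) - ksp θ k + ksp θ (k + 1)
        = θ * (θ - 1) / ((θ + k - 1) * (θ + k)) := by
      unfold ksp
      push_cast
      rw [show θ + ((k : ℝ) + 1) - 1 = θ + k by ring]
      field_simp [hu.ne', hv.ne']
      ring
    rw [hA, hB, sum_ratio θ hθ k n hk]
    have hS : 0 ≤ ∑ j ∈ Finset.Icc (k + 2) n, (1 : ℝ) / ((j : ℝ) - 1) := by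
      apply Finset.sum_nonneg
      intro j hj
      have h2 : 2 ≤ j := by have := (Finset.mem_Icc.mp hj).1; omega
      have h2R : (2 : ℝ) ≤ (j : ℝ) := by exact_mod_cast h2
      have : (0:ℝ) < (j : ℝ) - 1 := by linarith
      positivity
    have hden : (0:ℝ) < (θ + k - 1) * (θ + k) := by positivity
    have hAle : θ * (1 - 2 * θ) / ((θ + k - 1) * (θ + k)) ≤ 0 := by
      apply div_nonpos_of_nonpos_of_nonneg _ hden.le
      nlinarith
    have hBle : θ * (θ - 1) / ((θ + k - 1) * (θ + k)) ≤ 0 := by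
      apply div_nonpos_of_nonpos_of_nonneg _ hden.le
      nlinarith
    nlinarith [mul_nonneg hθ.le hS, mul_nonpos_of_nonpos_of_nonneg hBle (mul_nonneg hθ.le hS)]
end

section
/- If p_k - 2 p_k p_{k+1} - p_{k+1} ≤ 0 and p_k p_{k+1} - p_k + p_{k+1} ≤ 0 for all k ≥ 1, then for every n the sequence k ↦ s_1(k,n) is concave (its second difference in k is nonpositive). -/
open Finset

/-- `s₁(k,n) = ∑_{i=k}^n p_i ∏_{m=k,m≠i}^n (1-p_m)`, the probability of exactly one
success among trials `k,…,n` (equal to `s₀(k,n) ∑ p_i/(1-p_i)` when all `p_i < 1`). -/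
noncomputable def s1e (p : ℕ → ℝ) (k n : ℕ) : ℝ :=
  ∑ i ∈ Finset.Icc k n, p i * ∏ m ∈ (Finset.Icc k n).erase i, (1 - p m)

lemma Icc_eq_insert (k n : ℕ) (h : k ≤ n) :
    Finset.Icc k n = insert k (Finset.Icc (k + 1) n) := by
  rw [Finset.Icc_add_one_left_eq_Ioc, Finset.Ioc_insert_left h]

lemma s1e_rec (p : ℕ → ℝ) (k n : ℕ) (h : k ≤ n) :
    s1e p k n = p k * ∏ m ∈ Finset.Icc (k + 1) n, (1 - p m)
      + (1 - p k) * s1e p (k + 1) n := by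
  unfold s1e
  rw [Icc_eq_insert k n h]
  have hk : k ∉ Finset.Icc (k + 1) n := by simp
  rw [Finset.sum_insert hk, Finset.erase_insert hk, Finset.mul_sum]
  congr 1
  apply Finset.sum_congr rfl
  intro i hi
  have hik : i ≠ k := by
    rintro rfl; exact hk hi
  rw [Finset.erase_insert_of_ne (Ne.symm hik)]
  have hk' : k ∉ (Finset.Icc (k + 1) n).erase i := fun h' => hk (Finset.mem_of_mem_erase h')
  rw [Finset.prod_insert hk']
  ring

lemma s1e_nonneg (p : ℕ → ℝ) (k n : ℕ) (h : ∀ i ∈ Finset.Icc k n, 0 ≤ p i ∧ p i ≤ 1) :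
    0 ≤ s1e p k n := by
  apply Finset.sum_nonneg
  intro i hi
  apply mul_nonneg (h i hi).1
  apply Finset.prod_nonneg
  intro m hm
  have := h m (Finset.mem_of_mem_erase hm)
  linarith [this.2]

/-- if `p_k - 2p_k p_{k+1} - p_{k+1} ≤ 0` and
`p_k p_{k+1} - p_k + p_{k+1} ≤ 0` for all `k ≥ 1`, then for every `n` the sequence
`k ↦ s₁(k,n)` is concave: its second difference is nonpositive. -/
theorem s1_concave (p : ℕ → ℝ)
    (hp1 : 0 ≤ p 1 ∧ p 1 ≤ 1) (hp : ∀ i, 1 < i → 0 ≤ p i ∧ p i < 1)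
    (h1 : ∀ k, 1 ≤ k → p k - 2 * p k * p (k + 1) - p (k + 1) ≤ 0)
    (h2 : ∀ k, 1 ≤ k → p k * p (k + 1) - p k + p (k + 1) ≤ 0) :
    ∀ n k : ℕ, 1 ≤ k → k + 2 ≤ n →
      s1e p (k + 2) n - 2 * s1e p (k + 1) n + s1e p k n ≤ 0 := by
  intro n k hk hkn
  set S0 := ∏ m ∈ Finset.Icc (k + 2) n, (1 - p m) with hS0
  set S1 := s1e p (k + 2) n with hS1
  have hr1 : s1e p (k + 1) n = p (k + 1) * S0 + (1 - p (k + 1)) * S1 := by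
    have := s1e_rec p (k + 1) n (by omega)
    simpa using this
  have hprod : ∏ m ∈ Finset.Icc (k + 1) n, (1 - p m) = (1 - p (k + 1)) * S0 := by
    rw [Icc_eq_insert (k + 1) n (by omega), Finset.prod_insert (by simp)]
  have hr0 : s1e p k n = p k * ((1 - p (k + 1)) * S0) + (1 - p k) * s1e p (k + 1) n := by
    have := s1e_rec p k n (by omega)
    rw [this, hprod]
  have key : s1e p (k + 2) n - 2 * s1e p (k + 1) n + s1e p k n
      = (p k - 2 * p k * p (k + 1) - p (k + 1)) * S0
        + (p k * p (k + 1) - p k + p (k + 1)) * S1 := by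
    rw [hr0, hr1]; ring
  have hS0nn : 0 ≤ S0 := by
    apply Finset.prod_nonneg
    intro m hm
    have hm' : 1 < m := by
      have := (Finset.mem_Icc.mp hm).1; omega
    linarith [(hp m hm').2]
  have hS1nn : 0 ≤ S1 := by
    apply s1e_nonneg
    intro i hi
    have hi' : 1 < i := by
      have := (Finset.mem_Icc.mp hi).1; omega
    exact ⟨(hp i hi').1, le_of_lt (hp i hi').2⟩
  rw [key]
  have := h1 k hk
  have := h2 k hk
  have t1 : (p k - 2 * p k * p (k + 1) - p (k + 1)) * S0 ≤ 0 :=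
    mul_nonpos_of_nonpos_of_nonneg (by linarith) hS0nn
  have t2 : (p k * p (k + 1) - p k + p (k + 1)) * S1 ≤ 0 :=
    mul_nonpos_of_nonpos_of_nonneg (by linarith) hS1nn
  linarith
end

section
/- Descartes' rule of signs for power series in the one-sign-change case: if (c_j) is a real sequence such that for some index J, c_j ≥ 0 for j ≤ J and c_j ≤ 0 for j > J (with at least one strict inequality on each side making one sign change), and the power series f(x) = Σ_j c_j x^j converges on [0,R), then f has at most one zero in (0,R), and f is positive before that zero and negative after it. -/
open Filter

/-- Descartes' rule of signs for power series in the one-sign-change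
case: if the coefficients `c j` are nonnegative for `j ≤ J` and nonpositive for
`j > J`, with at least one strict inequality on each side, and
`f x = ∑' j, c j * x^j` converges on `[0,R)`, then `f` has at most one zero on
`(0,R)`, being positive before it and negative after it. -/
theorem descartes_one_sign_change (c : ℕ → ℝ) (R : ℝ) (hR : 0 < R) (J : ℕ)
    (hpos : ∀ j ≤ J, 0 ≤ c j) (hneg : ∀ j, J < j → c j ≤ 0)
    (hspos : ∃ j ≤ J, 0 < c j) (hsneg : ∃ j, J < j ∧ c j < 0)
    (hsum : ∀ x : ℝ, 0 ≤ x → x < R → Summable (fun j : ℕ => c j * x ^ j)) :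
    ∀ x : ℝ, 0 < x → x < R → (∑' j : ℕ, c j * x ^ j) = 0 →
      (∀ y : ℝ, 0 < y → y < x → 0 < ∑' j : ℕ, c j * y ^ j) ∧
      (∀ y : ℝ, x < y → y < R → (∑' j : ℕ, c j * y ^ j) < 0) := by
  obtain ⟨j₀, hj₀J, hj₀⟩ := hsneg
  -- key monotonicity: for 0 < a < b (both summable), f(b)·a^J < f(a)·b^J
  have key : ∀ a b : ℝ, 0 < a → a < b →
      Summable (fun j : ℕ => c j * a ^ j) → Summable (fun j : ℕ => c j * b ^ j) →
      (∑' j : ℕ, c j * b ^ j) * a ^ J < (∑' j : ℕ, c j * a ^ j) * b ^ J := by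
    intro a b ha hab hsa hsb
    have hb : 0 < b := ha.trans hab
    rw [← tsum_mul_right, ← tsum_mul_right]
    refine Summable.tsum_lt_tsum (i := j₀) ?_ ?_ (hsb.mul_right _) (hsa.mul_right _)
    · intro j
      rcases le_or_gt j J with hjJ | hjJ
      · have ea : a ^ J = a ^ j * a ^ (J - j) := by
          rw [← pow_add, Nat.add_sub_cancel' hjJ]
        have eb : b ^ J = b ^ j * b ^ (J - j) := by
          rw [← pow_add, Nat.add_sub_cancel' hjJ]
        have h1 : b ^ j * a ^ J ≤ a ^ j * b ^ J := by
          rw [ea, eb]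
          calc b ^ j * (a ^ j * a ^ (J - j)) = a ^ j * b ^ j * a ^ (J - j) := by ring
            _ ≤ a ^ j * b ^ j * b ^ (J - j) := by
                exact mul_le_mul_of_nonneg_left (pow_le_pow_left₀ ha.le hab.le _)
                  (by positivity)
            _ = a ^ j * (b ^ j * b ^ (J - j)) := by ring
        calc c j * b ^ j * a ^ J = c j * (b ^ j * a ^ J) := by ring
          _ ≤ c j * (a ^ j * b ^ J) := mul_le_mul_of_nonneg_left h1 (hpos j hjJ)
          _ = c j * a ^ j * b ^ J := by ring
      · have ea : a ^ j = a ^ J * a ^ (j - J) := by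
          rw [← pow_add, Nat.add_sub_cancel' hjJ.le]
        have eb : b ^ j = b ^ J * b ^ (j - J) := by
          rw [← pow_add, Nat.add_sub_cancel' hjJ.le]
        have h1 : a ^ j * b ^ J ≤ b ^ j * a ^ J := by
          rw [ea, eb]
          calc a ^ J * a ^ (j - J) * b ^ J = a ^ J * b ^ J * a ^ (j - J) := by ring
            _ ≤ a ^ J * b ^ J * b ^ (j - J) := by
                exact mul_le_mul_of_nonneg_left (pow_le_pow_left₀ ha.le hab.le _)
                  (by positivity)
            _ = b ^ J * b ^ (j - J) * a ^ J := by ring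
        calc c j * b ^ j * a ^ J = c j * (b ^ j * a ^ J) := by ring
          _ ≤ c j * (a ^ j * b ^ J) := mul_le_mul_of_nonpos_left h1 (hneg j hjJ)
          _ = c j * a ^ j * b ^ J := by ring
    · -- strict at j₀
      have ea : a ^ j₀ = a ^ J * a ^ (j₀ - J) := by
        rw [← pow_add, Nat.add_sub_cancel' hj₀J.le]
      have eb : b ^ j₀ = b ^ J * b ^ (j₀ - J) := by
        rw [← pow_add, Nat.add_sub_cancel' hj₀J.le]
      have h1 : a ^ j₀ * b ^ J < b ^ j₀ * a ^ J := by
        rw [ea, eb]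
        calc a ^ J * a ^ (j₀ - J) * b ^ J = a ^ J * b ^ J * a ^ (j₀ - J) := by ring
          _ < a ^ J * b ^ J * b ^ (j₀ - J) := by
              exact mul_lt_mul_of_pos_left
                (pow_lt_pow_left₀ hab ha.le (Nat.sub_ne_zero_of_lt hj₀J))
                (by positivity)
          _ = b ^ J * b ^ (j₀ - J) * a ^ J := by ring
      calc c j₀ * b ^ j₀ * a ^ J = c j₀ * (b ^ j₀ * a ^ J) := by ring
        _ < c j₀ * (a ^ j₀ * b ^ J) := mul_lt_mul_of_neg_left h1 hj₀
        _ = c j₀ * a ^ j₀ * b ^ J := by ring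
  intro x hx hxR hfx
  constructor
  · intro y hy hyx
    have hyR : y < R := hyx.trans hxR
    have := key y x hy hyx (hsum y hy.le hyR) (hsum x hx.le hxR)
    rw [hfx, zero_mul] at this
    nlinarith [pow_pos hx J, this]
  · intro y hxy hyR
    have hy : 0 < y := hx.trans hxy
    have := key x y hx hxy (hsum x hx.le hxR) (hsum y hy.le hyR)
    rw [hfx, zero_mul] at this
    nlinarith [pow_pos hx J, this]
end

section
/- For the logarithmic series prior π_n = c(q) q^n/n (n ≥ 1) and a mixed binomial process with uniform arrivals, conditionally on N_t = k ≥ 1 the number of future trials N_1 − N_t has negative binomial distribution NB(k, (1−t)q): P(N_1−N_t = j | N_t = k) = C(k+j−1, j) x^j (1−x)^k with x = (1−t)q. -/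
open Finset

/-- Logarithmic series prior `π_n = c(q) q^n / n` with `c(q) = 1/|log(1-q)|`
(and `π_0 = 0`). -/
noncomputable def logPrior (q : ℝ) (n : ℕ) : ℝ :=
  (1 / |Real.log (1 - q)|) * q ^ n / n

lemma logseries_term_eq (q t : ℝ) (K m : ℕ) :
    logPrior q (K + 1 + m) * (((K + 1 + m).choose (K + 1)) : ℝ) * t ^ (K + 1) * (1 - t) ^ m
      = ((1 / |Real.log (1 - q)|) * q ^ (K + 1) * t ^ (K + 1) / (K + 1))
        * (((m + K).choose K : ℝ) * ((1 - t) * q) ^ m) := by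
  have hchoose : (K + 1 + m).choose (K + 1) * (K + 1) = (K + 1 + m) * ((m + K).choose K) := by
    have h := Nat.add_one_mul_choose_eq (K + m) K
    rw [show K + 1 + m = (K + m) + 1 by ring, show m + K = K + m by ring]
    exact h.symm
  unfold logPrior
  have hK1 : ((K : ℝ) + 1 + m) ≠ 0 := by positivity
  have hK2 : ((K : ℝ) + 1) ≠ 0 := by positivity
  have hc : (((K + 1 + m).choose (K + 1)) : ℝ) * ((K : ℝ) + 1)
      = ((K : ℝ) + 1 + m) * (((m + K).choose K) : ℝ) := by
    exact_mod_cast congrArg (Nat.cast (R := ℝ)) hchoose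
  have hq' : q ^ (K + 1 + m) = q ^ (K + 1) * q ^ m := by rw [pow_add]
  have hpm : ((1 - t) * q) ^ m = (1 - t) ^ m * q ^ m := mul_pow _ _ _
  have key : (((K + 1 + m).choose (K + 1)) : ℝ) / ((K : ℝ) + 1 + m)
      = (((m + K).choose K) : ℝ) / ((K : ℝ) + 1) := by
    rw [div_eq_div_iff hK1 hK2]
    linear_combination hc
  push_cast
  rw [hq', hpm]
  linear_combination ((1 / |Real.log (1 - q)|) * q ^ (K + 1) * q ^ m * t ^ (K + 1)
    * (1 - t) ^ m) * key

/-- under the log-series prior, for a mixed binomial process with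
i.i.d. uniform arrivals, conditionally on `N_t = k ≥ 1` the number of future trials
is `NB(k, (1-t)q)`: the joint weight of `{N = k+j, N_t = k}` is
`π_{k+j} C(k+j,k) t^k (1-t)^j`, and dividing by the marginal of `{N_t = k}` gives
`C(k+j-1, j) x^j (1-x)^k` with `x = (1-t)q`. -/
theorem logseries_posterior_negbinomial (q t : ℝ) (k j : ℕ)
    (hq : 0 < q) (hq1 : q < 1) (ht : 0 < t) (ht1 : t ≤ 1) (hk : 1 ≤ k) :
    (logPrior q (k + j) * ((k + j).choose k : ℝ) * t ^ k * (1 - t) ^ j) /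
        (∑' m : ℕ, logPrior q (k + m) * ((k + m).choose k : ℝ) * t ^ k * (1 - t) ^ m)
      = ((k + j - 1).choose j : ℝ) * ((1 - t) * q) ^ j * (1 - (1 - t) * q) ^ k := by
  obtain ⟨K, rfl⟩ : ∃ K, k = K + 1 := ⟨k - 1, by omega⟩
  set x : ℝ := (1 - t) * q with hx
  have hx0 : 0 ≤ x := mul_nonneg (by linarith) hq.le
  have hx1 : x < 1 := by
    calc x ≤ 1 * q := by
            apply mul_le_mul_of_nonneg_right _ hq.le; linarith
      _ < 1 := by linarith
  have hxnorm : ‖x‖ < 1 := by rw [Real.norm_eq_abs, abs_of_nonneg hx0]; exact hx1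
  set A : ℝ := (1 / |Real.log (1 - q)|) * q ^ (K + 1) * t ^ (K + 1) / (K + 1) with hA
  have hlog : Real.log (1 - q) ≠ 0 := by
    have : Real.log (1 - q) < 0 := Real.log_neg (by linarith) (by linarith)
    linarith
  have hAne : A ≠ 0 := by
    have : |Real.log (1 - q)| > 0 := abs_pos.mpr hlog
    have h1 : (0:ℝ) < 1 / |Real.log (1 - q)| := by positivity
    positivity
  have hsum : (∑' m : ℕ, logPrior q (K + 1 + m) * (((K + 1 + m).choose (K + 1)) : ℝ)
      * t ^ (K + 1) * (1 - t) ^ m) = A * (1 / (1 - x) ^ (K + 1)) := by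
    calc (∑' m : ℕ, logPrior q (K + 1 + m) * (((K + 1 + m).choose (K + 1)) : ℝ)
          * t ^ (K + 1) * (1 - t) ^ m)
        = ∑' m : ℕ, A * (((m + K).choose K : ℝ) * x ^ m) := by
          exact tsum_congr fun m => logseries_term_eq q t K m
      _ = A * ∑' m : ℕ, ((m + K).choose K : ℝ) * x ^ m := tsum_mul_left
      _ = A * (1 / (1 - x) ^ (K + 1)) := by
          rw [tsum_choose_mul_geometric_of_norm_lt_one K hxnorm]
  rw [hsum, logseries_term_eq q t K j, ← hA]
  have h1x : (1 - x) ≠ 0 := by linarith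
  have hbin : ((K + 1 + j - 1).choose j : ℝ) = ((j + K).choose K : ℝ) := by
    norm_cast
    rw [show K + 1 + j - 1 = j + K by omega]
    exact Nat.choose_symm_of_eq_add (by ring)
  rw [show ((K + 1 + j - 1).choose j : ℝ) = ((j + K).choose K : ℝ) from hbin]
  field_simp
  ring
end

section
/- Let P_k(x) = k ∫_0^1 y^{k-1}/(1−xy)^k dy and Q_k(x) = k ∫_0^1 y^{k-1} |log(1−xy)|/(1−xy)^k dy for x ∈ [0,1), k ≥ 1. Then Q_k(x) P_{k+1}(x) − Q_{k+1}(x) P_k(x) < 0 for all x ∈ (0,1); equivalently the ratio Q_k/P_k is strictly increasing in k. -/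
/-!
With the weight `w y = y^{k-1}/(1-xy)^k`, one has `P_k = k ∫ w`, `Q_k = k ∫ w L`,
`P_{k+1} = (k+1) ∫ w H` and `Q_{k+1} = (k+1) ∫ w L H`, where `L y = -log(1-xy)` and
`H y = y/(1-xy)` are both strictly increasing on `[0,1]`. The claim is therefore Chebyshev's
integral inequality `∫ w L · ∫ w H < ∫ w · ∫ w L H`, which follows from the symmetrisation
`2 (∫ w · ∫ w L H - ∫ w L · ∫ w H) = ∬ w(y) w(z) (L z - L y) (H z - H y) dy dz`
and the positivity of the integrand off the diagonal.
-/

/-- Euler-integral form `P_k(x) = k ∫₀¹ y^{k-1}/(1-xy)^k dy`. -/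
noncomputable def Pint (k : ℕ) (x : ℝ) : ℝ :=
  k * ∫ y in (0:ℝ)..1, y ^ (k - 1) / (1 - x * y) ^ k

/-- Euler-integral form `Q_k(x) = k ∫₀¹ y^{k-1} |log(1-xy)|/(1-xy)^k dy`. -/
noncomputable def Qint (k : ℕ) (x : ℝ) : ℝ :=
  k * ∫ y in (0:ℝ)..1, y ^ (k - 1) * |Real.log (1 - x * y)| / (1 - x * y) ^ k

open intervalIntegral Set
open MeasureTheory (volume)

section Chebyshev

variable {a b : ℝ} {f g h : ℝ → ℝ}

theorem integral_mul_sub_mul_sub_eq (hf : ContinuousOn f (uIcc a b))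
    (hg : ContinuousOn g (uIcc a b)) (hh : ContinuousOn h (uIcc a b)) (z : ℝ) :
    ∫ y in a..b, f y * f z * (g z - g y) * (h z - h y) =
      f z * (g z * h z * (∫ y in a..b, f y) - g z * (∫ y in a..b, f y * h y)
        - h z * (∫ y in a..b, f y * g y) + ∫ y in a..b, f y * g y * h y) := by
  have hf' : IntervalIntegrable f volume a b := hf.intervalIntegrable
  have hfg : IntervalIntegrable (fun y => f y * g y) volume a b := (hf.mul hg).intervalIntegrable
  have hfh : IntervalIntegrable (fun y => f y * h y) volume a b := (hf.mul hh).intervalIntegrable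
  have hfgh : IntervalIntegrable (fun y => f y * g y * h y) volume a b :=
    ((hf.mul hg).mul hh).intervalIntegrable
  rw [← integral_const_mul, ← integral_const_mul, ← integral_const_mul,
    ← integral_sub (hf'.const_mul _) (hfh.const_mul _),
    ← integral_sub ((hf'.const_mul _).sub (hfh.const_mul _)) (hfg.const_mul _),
    ← integral_add (((hf'.const_mul _).sub (hfh.const_mul _)).sub (hfg.const_mul _)) hfgh,
    ← integral_const_mul]
  congr 1 with y
  ring

theorem integral_integral_mul_sub_mul_sub_eq (hf : ContinuousOn f (uIcc a b))
    (hg : ContinuousOn g (uIcc a b)) (hh : ContinuousOn h (uIcc a b)) :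
    ∫ z in a..b, ∫ y in a..b, f y * f z * (g z - g y) * (h z - h y) =
      2 * ((∫ y in a..b, f y) * (∫ y in a..b, f y * g y * h y)
        - (∫ y in a..b, f y * g y) * ∫ y in a..b, f y * h y) := by
  simp_rw [integral_mul_sub_mul_sub_eq hf hg hh]
  set A := ∫ y in a..b, f y
  set B := ∫ y in a..b, f y * g y
  set C := ∫ y in a..b, f y * h y
  set D := ∫ y in a..b, f y * g y * h y
  have hf' : IntervalIntegrable f volume a b := hf.intervalIntegrable
  have hfg : IntervalIntegrable (fun y => f y * g y) volume a b := (hf.mul hg).intervalIntegrable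
  have hfh : IntervalIntegrable (fun y => f y * h y) volume a b := (hf.mul hh).intervalIntegrable
  have hfgh : IntervalIntegrable (fun y => f y * g y * h y) volume a b :=
    ((hf.mul hg).mul hh).intervalIntegrable
  have hsplit : ∀ z, f z * (g z * h z * A - g z * C - h z * B + D) =
      A * (f z * g z * h z) - C * (f z * g z) - B * (f z * h z) + D * f z := fun z => by ring
  simp_rw [hsplit]
  rw [integral_add (((hfgh.const_mul _).sub (hfg.const_mul _)).sub (hfh.const_mul _))
      (hf'.const_mul _),
    integral_sub ((hfgh.const_mul _).sub (hfg.const_mul _)) (hfh.const_mul _),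
    integral_sub (hfgh.const_mul _) (hfg.const_mul _),
    integral_const_mul, integral_const_mul, integral_const_mul, integral_const_mul]
  ring

theorem mul_mul_sub_mul_sub_pos (hf : ∀ y ∈ Ioo a b, 0 < f y) (hg : StrictMonoOn g (Ioo a b))
    (hh : StrictMonoOn h (Ioo a b)) {y z : ℝ} (hy : y ∈ Ioo a b) (hz : z ∈ Ioo a b)
    (hyz : y ≠ z) : 0 < f y * f z * (g z - g y) * (h z - h y) := by
  have hfyz := mul_pos (hf y hy) (hf z hz)
  rcases hyz.lt_or_gt with hlt | hlt
  · exact mul_pos (mul_pos hfyz (sub_pos.2 (hg hy hz hlt))) (sub_pos.2 (hh hy hz hlt))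
  · rw [mul_assoc]
    exact mul_pos hfyz (mul_pos_of_neg_of_neg (sub_neg.2 (hg hz hy hlt))
      (sub_neg.2 (hh hz hy hlt)))

theorem integral_mul_integral_lt_of_strictMonoOn (hab : a < b)
    (hf : ContinuousOn f (Icc a b)) (hg : ContinuousOn g (Icc a b))
    (hh : ContinuousOn h (Icc a b)) (hf_pos : ∀ y ∈ Ioo a b, 0 < f y)
    (hg_mono : StrictMonoOn g (Ioo a b)) (hh_mono : StrictMonoOn h (Ioo a b)) :
    (∫ y in a..b, f y * g y) * (∫ y in a..b, f y * h y) <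
      (∫ y in a..b, f y) * ∫ y in a..b, f y * g y * h y := by
  rw [← uIcc_of_le hab.le] at hf hg hh
  have hF : ∀ z, ContinuousOn (fun y => f y * f z * (g z - g y) * (h z - h y)) (uIcc a b) :=
    fun z => ((hf.mul continuousOn_const).mul (continuousOn_const.sub hg)).mul
      (continuousOn_const.sub hh)
  suffices 0 < ∫ z in a..b, ∫ y in a..b, f y * f z * (g z - g y) * (h z - h y) by
    rw [integral_integral_mul_sub_mul_sub_eq hf hg hh] at this
    linarith
  refine intervalIntegral_pos_of_pos_on ?_ (fun z hz => ?_) hab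
  · simp_rw [integral_mul_sub_mul_sub_eq hf hg hh]
    exact (hf.mul (((((hg.mul hh).mul continuousOn_const).sub (hg.mul continuousOn_const)).sub
      (hh.mul continuousOn_const)).add continuousOn_const)).intervalIntegrable
  · have hsub : ∀ {c d}, c ∈ Icc a b → d ∈ Icc a b → uIcc c d ⊆ uIcc a b := fun hc hd =>
      uIcc_of_le hab.le ▸ uIcc_subset_Icc hc hd
    have ha : a ∈ Icc a b := left_mem_Icc.2 hab.le
    have hb : b ∈ Icc a b := right_mem_Icc.2 hab.le
    have hz' : z ∈ Icc a b := Ioo_subset_Icc_self hz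
    have hpos : ∀ y ∈ Ioo a b, y ≠ z → 0 < f y * f z * (g z - g y) * (h z - h y) :=
      fun y hy hyz => mul_mul_sub_mul_sub_pos hf_pos hg_mono hh_mono hy hz hyz
    rw [← integral_add_adjacent_intervals ((hF z).mono (hsub ha hz')).intervalIntegrable
      ((hF z).mono (hsub hz' hb)).intervalIntegrable]
    refine add_pos (intervalIntegral_pos_of_pos_on ((hF z).mono (hsub ha hz')).intervalIntegrable
      (fun y hy => hpos y ⟨hy.1, hy.2.trans hz.2⟩ hy.2.ne) hz.1)
      (intervalIntegral_pos_of_pos_on ((hF z).mono (hsub hz' hb)).intervalIntegrable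
      (fun y hy => hpos y ⟨hz.1.trans hy.1, hy.2⟩ hy.1.ne') hz.2)

end Chebyshev

section EulerIntegrals

variable {x : ℝ}

theorem one_sub_mul_pos (hx0 : 0 ≤ x) (hx1 : x < 1) {y : ℝ} (hy : y ∈ Icc (0:ℝ) 1) :
    0 < 1 - x * y := by
  nlinarith [hy.1, hy.2]

theorem strictMonoOn_div_one_sub_mul (hx0 : 0 ≤ x) (hx1 : x < 1) :
    StrictMonoOn (fun y => y / (1 - x * y)) (Icc 0 1) := fun y hy z hz hyz => by
  rw [div_lt_div_iff₀ (one_sub_mul_pos hx0 hx1 hy) (one_sub_mul_pos hx0 hx1 hz)]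
  linarith

theorem strictMonoOn_neg_log_one_sub_mul (hx0 : 0 < x) (hx1 : x < 1) :
    StrictMonoOn (fun y => -Real.log (1 - x * y)) (Icc 0 1) := fun y _ z hz hyz =>
  neg_lt_neg (Real.log_lt_log (one_sub_mul_pos hx0.le hx1 hz) (by nlinarith))

theorem pow_div_pow_succ {k : ℕ} (hk : 1 ≤ k) (y t : ℝ) :
    y ^ k / t ^ (k + 1) = y ^ (k - 1) / t ^ k * (y / t) := by
  obtain ⟨m, rfl⟩ := Nat.exists_eq_add_of_le' hk
  rw [div_mul_div_comm, ← pow_succ, ← pow_succ, Nat.add_sub_cancel]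

theorem Pint_succ {k : ℕ} (hk : 1 ≤ k) (x : ℝ) :
    Pint (k + 1) x =
      (k + 1 : ℕ) * ∫ y in (0:ℝ)..1, y ^ (k - 1) / (1 - x * y) ^ k * (y / (1 - x * y)) := by
  simp only [Pint, Nat.add_sub_cancel, pow_div_pow_succ hk]

theorem Qint_eq (hx0 : 0 ≤ x) (hx1 : x ≤ 1) (k : ℕ) :
    Qint k x = k * ∫ y in (0:ℝ)..1, y ^ (k - 1) / (1 - x * y) ^ k * -Real.log (1 - x * y) := by
  rw [Qint]
  congr 1
  refine integral_congr fun y hy => ?_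
  rw [uIcc_of_le zero_le_one] at hy
  have hlog : Real.log (1 - x * y) ≤ 0 :=
    Real.log_nonpos (by nlinarith [hy.1, hy.2]) (by nlinarith [hy.1])
  simp only [abs_of_nonpos hlog]
  ring

theorem Qint_succ {k : ℕ} (hk : 1 ≤ k) (hx0 : 0 ≤ x) (hx1 : x ≤ 1) :
    Qint (k + 1) x = (k + 1 : ℕ) * ∫ y in (0:ℝ)..1,
      y ^ (k - 1) / (1 - x * y) ^ k * -Real.log (1 - x * y) * (y / (1 - x * y)) := by
  simp only [Qint_eq hx0 hx1, Nat.add_sub_cancel, pow_div_pow_succ hk]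
  congr 1
  refine integral_congr fun y _ => ?_
  ring

end EulerIntegrals

/-- for `k ≥ 1` and `x ∈ (0,1)`,
`Q_k(x) P_{k+1}(x) − Q_{k+1}(x) P_k(x) < 0`; equivalently `Q_k/P_k` is strictly
increasing in `k`. -/
theorem QP_ratio_increasing (k : ℕ) (hk : 1 ≤ k) (x : ℝ) (hx0 : 0 < x) (hx1 : x < 1) :
    Qint k x * Pint (k + 1) x - Qint (k + 1) x * Pint k x < 0 := by
  have hpos : ∀ y ∈ Icc (0:ℝ) 1, 0 < 1 - x * y := fun y hy => one_sub_mul_pos hx0.le hx1 hy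
  have key := integral_mul_integral_lt_of_strictMonoOn zero_lt_one
    (f := fun y => y ^ (k - 1) / (1 - x * y) ^ k) (g := fun y => -Real.log (1 - x * y))
    (h := fun y => y / (1 - x * y))
    (ContinuousOn.div (by fun_prop) (by fun_prop) fun y hy => (pow_pos (hpos y hy) k).ne')
    (ContinuousOn.neg (ContinuousOn.log (by fun_prop) fun y hy => (hpos y hy).ne'))
    (ContinuousOn.div (by fun_prop) (by fun_prop) fun y hy => (hpos y hy).ne')
    (fun y hy => div_pos (pow_pos hy.1 _) (pow_pos (hpos y (Ioo_subset_Icc_self hy)) _))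
    ((strictMonoOn_neg_log_one_sub_mul hx0 hx1).mono Ioo_subset_Icc_self)
    ((strictMonoOn_div_one_sub_mul hx0.le hx1).mono Ioo_subset_Icc_self)
  rw [Qint_eq hx0.le hx1.le, Pint_succ hk, Qint_succ hk hx0.le hx1.le, Pint]
  have hk' : (0:ℝ) < k * (k + 1 : ℕ) := by positivity
  linarith [mul_lt_mul_of_pos_left key hk']
end

section
/- For every k ≥ 1 the equation Q_k(x) = P_k(x) has exactly one root α_k in (0,1), where P_k(x) = k ∫_0^1 y^{k-1}(1−xy)^{-k} dy and Q_k(x) = k ∫_0^1 y^{k-1} |log(1−xy)| (1−xy)^{-k} dy: the ratio Q_k(x)/P_k(x) is continuous and strictly increasing in x on [0,1), equals 0 at x = 0, and tends to ∞ as x → 1. -/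
/-!
Substituting `t = x y` turns `Q_k(x) / P_k(x)` into the mean of `g(t) = |log (1 - t)|` over
`[0, x]` against the weight `w(t) = t^(k-1) (1 - t)^(-k)`. Since `g` is strictly increasing,
this mean lies strictly between `g(0) = 0` and `g(x)`, and it increases strictly in `x`: its
derivative is `w(x) (g(x) ∫₀ˣ w - ∫₀ˣ w g) / (∫₀ˣ w)²`. It tends to `∞` because `g → ∞` while the
total weight `∫₀ˣ w ≥ 2^(1-k) log (1 / (2 (1 - x)))` diverges. At `x = 1/2` the mean is below
`g(1/2) = log 2 < 1`, so the intermediate value theorem gives a root of `Q_k = P_k`, unique by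
monotonicity.
-/

open Filter Set

open Topology intervalIntegral

section WeightedMean

variable {f h g : ℝ → ℝ} {a b x y : ℝ}

noncomputable def weightedMean (h g : ℝ → ℝ) (a x : ℝ) : ℝ :=
  (∫ t in a..x, h t * g t) / ∫ t in a..x, h t

lemma ContinuousOn.intervalIntegrable_of_mem_Ico (hf : ContinuousOn f (Ico a b))
    (hx : x ∈ Ico a b) (hy : y ∈ Ico a b) : IntervalIntegrable f MeasureTheory.volume x y :=
  (hf.mono (ordConnected_Ico.uIcc_subset hx hy)).intervalIntegrable

lemma hasDerivAt_integral_of_continuousOn_Ico (hf : ContinuousOn f (Ico a b))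
    (hx : x ∈ Ioo a b) : HasDerivAt (fun y => ∫ t in a..y, f t) (f x) x := by
  have hf' : ContinuousOn f (Ioo a b) := hf.mono Ioo_subset_Ico_self
  exact integral_hasDerivAt_right
    (hf.intervalIntegrable_of_mem_Ico (left_mem_Ico.2 (hx.1.trans hx.2)) (Ioo_subset_Ico_self hx))
    (hf'.stronglyMeasurableAtFilter isOpen_Ioo x hx) (hf'.continuousAt (isOpen_Ioo.mem_nhds hx))

lemma integral_pos_of_continuousOn_Ico (hf : ContinuousOn f (Ico a b))
    (hpos : ∀ t ∈ Ioo a b, 0 < f t) (hx : x ∈ Ioo a b) : 0 < ∫ t in a..x, f t :=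
  intervalIntegral_pos_of_pos_on
    (hf.intervalIntegrable_of_mem_Ico (left_mem_Ico.2 (hx.1.trans hx.2)) (Ioo_subset_Ico_self hx))
    (fun t ht => hpos t ⟨ht.1, ht.2.trans hx.2⟩) hx.1

variable (hh : ContinuousOn h (Ico a b)) (hg : ContinuousOn g (Ico a b))
  (hpos : ∀ t ∈ Ioo a b, 0 < h t)
include hh hg hpos

omit hg in
lemma integral_mul_lt_integral_mul {φ ψ : ℝ → ℝ} (hφ : ContinuousOn φ (Ico a b))
    (hψ : ContinuousOn ψ (Ico a b)) (hx : x ∈ Ioo a b) (hlt : ∀ t ∈ Ioo a x, φ t < ψ t) :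
    ∫ t in a..x, h t * φ t < ∫ t in a..x, h t * ψ t := by
  have ha : a ∈ Ico a b := left_mem_Ico.2 (hx.1.trans hx.2)
  have hx' : x ∈ Ico a b := Ioo_subset_Ico_self hx
  rw [← sub_pos, ← integral_sub ((hh.fun_mul hψ).intervalIntegrable_of_mem_Ico ha hx')
    ((hh.fun_mul hφ).intervalIntegrable_of_mem_Ico ha hx')]
  refine intervalIntegral_pos_of_pos_on
    (((hh.fun_mul hψ).fun_sub (hh.fun_mul hφ)).intervalIntegrable_of_mem_Ico ha hx')
    (fun t ht => ?_) hx.1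
  rw [← mul_sub]
  exact mul_pos (hpos t ⟨ht.1, ht.2.trans hx.2⟩) (sub_pos.2 (hlt t ht))

lemma weightedMean_mem_Ioo (hmono : StrictMonoOn g (Ico a b)) (hx : x ∈ Ioo a b) :
    weightedMean h g a x ∈ Ioo (g a) (g x) := by
  have hF := integral_pos_of_continuousOn_Ico hh hpos hx
  have hIco : ∀ t ∈ Ioo a x, t ∈ Ico a b := fun t ht => ⟨ht.1.le, ht.2.trans hx.2⟩
  have hlow := integral_mul_lt_integral_mul hh hpos continuousOn_const hg hx
    fun t ht => hmono (left_mem_Ico.2 (hx.1.trans hx.2)) (hIco t ht) ht.1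
  have hhigh := integral_mul_lt_integral_mul hh hpos hg continuousOn_const hx
    fun t ht => hmono (hIco t ht) (Ioo_subset_Ico_self hx) ht.2
  rw [intervalIntegral.integral_mul_const] at hlow hhigh
  rw [weightedMean, mem_Ioo, lt_div_iff₀ hF, div_lt_iff₀ hF, mul_comm (g a), mul_comm (g x)]
  exact ⟨hlow, hhigh⟩

lemma hasDerivAt_weightedMean (hx : x ∈ Ioo a b) :
    HasDerivAt (weightedMean h g a)
      (h x * (g x * (∫ t in a..x, h t) - ∫ t in a..x, h t * g t) / (∫ t in a..x, h t) ^ 2)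
      x := by
  refine ((hasDerivAt_integral_of_continuousOn_Ico (hh.fun_mul hg) hx).fun_div
    (hasDerivAt_integral_of_continuousOn_Ico hh hx)
    (integral_pos_of_continuousOn_Ico hh hpos hx).ne').congr_deriv ?_
  ring

lemma continuousOn_weightedMean : ContinuousOn (weightedMean h g a) (Ioo a b) :=
  fun _ hx => (hasDerivAt_weightedMean hh hg hpos hx).continuousAt.continuousWithinAt

lemma strictMonoOn_weightedMean (hmono : StrictMonoOn g (Ico a b)) :
    StrictMonoOn (weightedMean h g a) (Ioo a b) := by
  refine strictMonoOn_of_deriv_pos (convex_Ioo a b) (continuousOn_weightedMean hh hg hpos)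
    fun x hx => ?_
  rw [interior_Ioo] at hx
  rw [(hasDerivAt_weightedMean hh hg hpos hx).deriv]
  have := (weightedMean_mem_Ioo hh hg hpos hmono hx).2
  rw [weightedMean, div_lt_iff₀ (integral_pos_of_continuousOn_Ico hh hpos hx)] at this
  exact div_pos (mul_pos (hpos x hx) (sub_pos.2 this))
    (pow_pos (integral_pos_of_continuousOn_Ico hh hpos hx) 2)

omit hpos in
lemma tendsto_weightedMean_atTop (hab : a < b) (hnonneg : ∀ t ∈ Ioo a b, 0 ≤ h t)
    (hg_top : Tendsto g (𝓝[<] b) atTop)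
    (hF_top : Tendsto (fun x => ∫ t in a..x, h t) (𝓝[<] b) atTop) :
    Tendsto (weightedMean h g a) (𝓝[<] b) atTop := by
  refine tendsto_atTop.2 fun M => ?_
  obtain ⟨c, hcb, hc⟩ := mem_nhdsLT_iff_exists_Ico_subset.1 (hg_top.eventually_ge_atTop (M + 1))
  set d := max a c
  have hd : d ∈ Ico a b := ⟨le_max_left a c, max_lt hab hcb⟩
  set C := (∫ t in a..d, h t * g t) - (M + 1) * ∫ t in a..d, h t
  filter_upwards [Ioo_mem_nhdsLT hd.2, hF_top.eventually_ge_atTop (|C| + 1)] with x hx hFx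
  have hx' : x ∈ Ico a b := ⟨hd.1.trans hx.1.le, hx.2⟩
  have ha : a ∈ Ico a b := left_mem_Ico.2 hab
  have hsplit_h := integral_add_adjacent_intervals
    (hh.intervalIntegrable_of_mem_Ico ha hd) (hh.intervalIntegrable_of_mem_Ico hd hx')
  have hsplit_hg := integral_add_adjacent_intervals
    ((hh.fun_mul hg).intervalIntegrable_of_mem_Ico ha hd)
    ((hh.fun_mul hg).intervalIntegrable_of_mem_Ico hd hx')
  have htail : (M + 1) * ∫ t in d..x, h t ≤ ∫ t in d..x, h t * g t := by
    rw [← intervalIntegral.integral_const_mul]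
    refine integral_mono_on_of_le_Ioo hx.1.le
      ((hh.intervalIntegrable_of_mem_Ico hd hx').const_mul _)
      ((hh.fun_mul hg).intervalIntegrable_of_mem_Ico hd hx') fun t ht => ?_
    rw [mul_comm]
    exact mul_le_mul_of_nonneg_left (hc ⟨(le_max_right a c).trans ht.1.le, ht.2.trans hx.2⟩)
      (hnonneg t ⟨hd.1.trans_lt ht.1, ht.2.trans hx.2⟩)
  rw [weightedMean, le_div_iff₀ (by linarith [abs_nonneg C])]
  calc M * ∫ t in a..x, h t ≤ C + (M + 1) * ∫ t in a..x, h t := by linarith [neg_abs_le C]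
    _ = (∫ t in a..d, h t * g t) + (M + 1) * ∫ t in d..x, h t := by rw [← hsplit_h]; ring
    _ ≤ (∫ t in a..d, h t * g t) + ∫ t in d..x, h t * g t := by gcongr
    _ = ∫ t in a..x, h t * g t := hsplit_hg

end WeightedMean

section IntervalRoot

variable {f : ℝ → ℝ} {a b c : ℝ}

lemma StrictMonoOn.Ico_of_Ioo (hf : StrictMonoOn f (Ioo a b)) (ha : ∀ x ∈ Ioo a b, f a < f x) :
    StrictMonoOn f (Ico a b) := by
  intro x hx y hy hxy
  rcases hx.1.eq_or_lt with rfl | hax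
  · exact ha y ⟨hxy, hy.2⟩
  · exact hf ⟨hax, hx.2⟩ ⟨hax.trans hxy, hy.2⟩ hxy

lemma existsUnique_eq_of_strictMonoOn_Ioo (hf : ContinuousOn f (Ioo a b))
    (hmono : StrictMonoOn f (Ioo a b)) (hlow : ∃ x ∈ Ioo a b, f x < c)
    (htop : Tendsto f (𝓝[<] b) atTop) : ∃! x, x ∈ Ioo a b ∧ f x = c := by
  obtain ⟨x, hx, hfx⟩ := hlow
  obtain ⟨y, hfy, hy⟩ := ((htop.eventually_ge_atTop c).and (Ioo_mem_nhdsLT hx.2)).exists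
  have hsub : Icc x y ⊆ Ioo a b := Icc_subset_Ioo hx.1 hy.2
  obtain ⟨z, hz, hfz⟩ := intermediate_value_Icc hy.1.le (hf.mono hsub) ⟨hfx.le, hfy⟩
  exact ⟨z, ⟨hsub hz, hfz⟩, fun w hw => hmono.injOn hw.1 (hsub hz) (hw.2.trans hfz.symm)⟩

end IntervalRoot

namespace EulerIntegral

noncomputable def weight (k : ℕ) (t : ℝ) : ℝ := t ^ (k - 1) / (1 - t) ^ k

noncomputable def absLogOneSub (t : ℝ) : ℝ := |Real.log (1 - t)|

variable {k : ℕ} {x : ℝ}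

lemma continuousOn_weight : ContinuousOn (weight k) (Ico 0 1) :=
  continuousOn_of_forall_continuousAt fun _ ht =>
    (continuousAt_id.pow _).div (continuousAt_const.sub continuousAt_id |>.pow _)
      (pow_ne_zero _ (sub_ne_zero.2 ht.2.ne'))

lemma weight_pos (hx : x ∈ Ioo 0 1) : 0 < weight k x :=
  div_pos (pow_pos hx.1 _) (pow_pos (sub_pos.2 hx.2) _)

lemma continuousOn_absLogOneSub : ContinuousOn absLogOneSub (Ico 0 1) :=
  continuousOn_of_forall_continuousAt fun _ ht =>
    ((Real.continuousAt_log (sub_ne_zero.2 ht.2.ne')).comp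
      (continuousAt_const.sub continuousAt_id)).abs

lemma strictMonoOn_absLogOneSub : StrictMonoOn absLogOneSub (Ico 0 1) := by
  intro s hs t ht hst
  have habs : ∀ u ∈ Ico (0 : ℝ) 1, absLogOneSub u = -Real.log (1 - u) := fun u hu =>
    abs_of_nonpos (Real.log_nonpos (by linarith [hu.2]) (by linarith [hu.1]))
  rw [habs s hs, habs t ht]
  exact neg_lt_neg (Real.log_lt_log (by linarith [ht.2]) (by linarith))

lemma tendsto_one_sub_nhdsLT_one : Tendsto (fun x : ℝ => 1 - x) (𝓝[<] 1) (𝓝[>] 0) := by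
  have h : ContinuousWithinAt (fun x : ℝ => 1 - x) (Iio 1) 1 :=
    (continuous_sub_left 1).continuousWithinAt
  have h' := h.tendsto_nhdsWithin (t := Ioi 0) fun x hx => sub_pos.2 hx
  rwa [sub_self] at h'

lemma tendsto_absLogOneSub : Tendsto absLogOneSub (𝓝[<] 1) atTop :=
  tendsto_abs_atBot_atTop.comp (Real.tendsto_log_nhdsGT_zero.comp tendsto_one_sub_nhdsLT_one)

lemma tendsto_integral_weight (hk : 1 ≤ k) :
    Tendsto (fun x => ∫ t in (0 : ℝ)..x, weight k t) (𝓝[<] 1) atTop := by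
  have hlog :
      Tendsto (fun x => (1 / 2 : ℝ) ^ (k - 1) * Real.log (1 / 2 / (1 - x))) (𝓝[<] 1) atTop :=
    (Real.tendsto_log_atTop.comp ((tendsto_inv_nhdsGT_zero.comp
      tendsto_one_sub_nhdsLT_one).const_mul_atTop (by norm_num))).const_mul_atTop (by positivity)
  refine tendsto_atTop_mono' _ ?_ hlog
  filter_upwards [Ico_mem_nhdsLT (by norm_num : (1 / 2 : ℝ) < 1)] with x hx
  have hint : ∀ {u v : ℝ}, u ∈ Ico (0 : ℝ) 1 → v ∈ Ico (0 : ℝ) 1 →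
      IntervalIntegrable (weight k) MeasureTheory.volume u v :=
    continuousOn_weight.intervalIntegrable_of_mem_Ico
  have hhalf : (1 / 2 : ℝ) ∈ Ico (0 : ℝ) 1 := by norm_num
  have hx' : x ∈ Ico (0 : ℝ) 1 := ⟨by linarith [hx.1], hx.2⟩
  calc (1 / 2 : ℝ) ^ (k - 1) * Real.log (1 / 2 / (1 - x))
      = ∫ t in (1 / 2 : ℝ)..x, (1 / 2 : ℝ) ^ (k - 1) * (1 - t)⁻¹ := by
        rw [intervalIntegral.integral_const_mul, integral_comp_sub_left (fun t => t⁻¹),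
          integral_inv_of_pos (sub_pos.2 hx.2) (by norm_num)]
        norm_num
    _ ≤ ∫ t in (1 / 2 : ℝ)..x, weight k t := by
        refine integral_mono_on hx.1 ?_ (hint hhalf hx') fun t ht => ?_
        · refine (intervalIntegral.intervalIntegrable_inv (fun t ht => ?_)
            (continuousOn_const.sub continuousOn_id)).const_mul _
          rw [uIcc_of_le hx.1] at ht
          exact (sub_pos.2 (ht.2.trans_lt hx.2)).ne'
        · have h1t : 0 < 1 - t := by linarith [ht.2, hx.2]
          rw [weight, div_eq_mul_inv]
          exact mul_le_mul (pow_le_pow_left₀ (by norm_num) ht.1 _)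
            (inv_anti₀ (pow_pos h1t _) (pow_le_of_le_one h1t.le (by linarith [ht.1])
              (by omega))) (by positivity) (pow_nonneg (by linarith [ht.1]) _)
    _ ≤ ∫ t in (0 : ℝ)..x, weight k t := by
        rw [← integral_add_adjacent_intervals (hint (left_mem_Ico.2 one_pos) hhalf)
          (hint hhalf hx')]
        have := integral_pos_of_continuousOn_Ico continuousOn_weight (fun _ => weight_pos (k := k))
          (show (1 / 2 : ℝ) ∈ Ioo 0 1 by norm_num)
        linarith

lemma integral_pow_mul_comp_mul (n : ℕ) (φ : ℝ → ℝ) (hx : x ≠ 0) :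
    ∫ y in (0 : ℝ)..1, y ^ n * φ (x * y) =
      (x ^ (n + 1))⁻¹ * ∫ t in (0 : ℝ)..x, t ^ n * φ t := by
  have h : ∀ y, y ^ n * φ (x * y) = (x ^ n)⁻¹ * ((x * y) ^ n * φ (x * y)) := fun y => by
    rw [mul_pow, ← mul_assoc, ← mul_assoc, inv_mul_cancel₀ (pow_ne_zero _ hx), one_mul]
  simp_rw [h, intervalIntegral.integral_const_mul,
    integral_comp_mul_left (fun t => t ^ n * φ t) hx, mul_zero, mul_one, smul_eq_mul, pow_succ,
    mul_inv, mul_assoc]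

lemma Pint_eq (hk : 1 ≤ k) (hx : x ≠ 0) :
    Pint k x = k * ((x ^ k)⁻¹ * ∫ t in (0 : ℝ)..x, weight k t) := by
  have := integral_pow_mul_comp_mul (k - 1) (fun t => ((1 - t) ^ k)⁻¹) hx
  rw [Nat.sub_add_cancel hk] at this
  simp only [Pint, weight, div_eq_mul_inv, this]

lemma Qint_eq (hk : 1 ≤ k) (hx : x ≠ 0) :
    Qint k x = k * ((x ^ k)⁻¹ * ∫ t in (0 : ℝ)..x, weight k t * absLogOneSub t) := by
  have := integral_pow_mul_comp_mul (k - 1) (fun t => |Real.log (1 - t)| / (1 - t) ^ k) hx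
  rw [Nat.sub_add_cancel hk] at this
  simp only [Qint, weight, absLogOneSub, mul_div_assoc, this, div_mul_eq_mul_div]

lemma Pint_pos (hk : 1 ≤ k) (hx : x ∈ Ioo 0 1) : 0 < Pint k x := by
  rw [Pint_eq hk hx.1.ne']
  have hk' : (0 : ℝ) < k := by exact_mod_cast hk
  exact mul_pos hk' (mul_pos (inv_pos.2 (pow_pos hx.1 k))
    (integral_pos_of_continuousOn_Ico continuousOn_weight (fun _ => weight_pos) hx))

lemma Qint_div_Pint_eqOn (hk : 1 ≤ k) :
    EqOn (fun x => Qint k x / Pint k x) (weightedMean (weight k) absLogOneSub 0) (Ioo 0 1) :=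
  fun x hx => by
    have hc : (k : ℝ) * (x ^ k)⁻¹ ≠ 0 := by
      have : (0 : ℝ) < k := by exact_mod_cast hk
      have := hx.1
      positivity
    simp only [Qint_eq hk hx.1.ne', Pint_eq hk hx.1.ne', ← mul_assoc, weightedMean]
    exact mul_div_mul_left _ _ hc

lemma Qint_div_Pint_mem_Ioo (hk : 1 ≤ k) (hx : x ∈ Ioo 0 1) :
    Qint k x / Pint k x ∈ Ioo 0 (absLogOneSub x) := by
  rw [show Qint k x / Pint k x = _ from Qint_div_Pint_eqOn hk hx]
  simpa [absLogOneSub] using weightedMean_mem_Ioo continuousOn_weight continuousOn_absLogOneSub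
    (fun _ => weight_pos) strictMonoOn_absLogOneSub hx

lemma continuousOn_Qint_div_Pint (hk : 1 ≤ k) :
    ContinuousOn (fun x => Qint k x / Pint k x) (Ioo 0 1) :=
  (continuousOn_weightedMean continuousOn_weight continuousOn_absLogOneSub
    (fun _ => weight_pos)).congr (Qint_div_Pint_eqOn hk)

lemma strictMonoOn_Qint_div_Pint (hk : 1 ≤ k) :
    StrictMonoOn (fun x => Qint k x / Pint k x) (Ioo 0 1) :=
  (strictMonoOn_weightedMean continuousOn_weight continuousOn_absLogOneSub (fun _ => weight_pos)
    strictMonoOn_absLogOneSub).congr (Qint_div_Pint_eqOn hk).symm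

lemma tendsto_Qint_div_Pint (hk : 1 ≤ k) :
    Tendsto (fun x => Qint k x / Pint k x) (𝓝[<] 1) atTop :=
  (tendsto_weightedMean_atTop continuousOn_weight continuousOn_absLogOneSub one_pos
    (fun _ ht => (weight_pos ht).le) tendsto_absLogOneSub (tendsto_integral_weight hk)).congr'
    (eventuallyEq_of_mem (Ioo_mem_nhdsLT one_pos) (Qint_div_Pint_eqOn hk).symm)

lemma Qint_div_Pint_half_lt_one (hk : 1 ≤ k) : Qint k (1 / 2) / Pint k (1 / 2) < 1 :=
  calc Qint k (1 / 2) / Pint k (1 / 2) < absLogOneSub (1 / 2) :=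
        (Qint_div_Pint_mem_Ioo hk (by norm_num)).2
    _ = Real.log 2 := by
        rw [absLogOneSub, show (1 : ℝ) - 1 / 2 = 2⁻¹ by norm_num, Real.log_inv, abs_neg,
          abs_of_pos (Real.log_pos one_lt_two)]
    _ < 1 := Real.log_two_lt_d9.trans (by norm_num)

end EulerIntegral

open EulerIntegral in
/-- for every `k ≥ 1`, the ratio `Q_k/P_k` is strictly increasing on
`[0,1)`, vanishes at `0`, and tends to `∞` as `x → 1⁻`; consequently the equation
`Q_k(x) = P_k(x)` has exactly one root `α_k ∈ (0,1)`. -/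
theorem unique_root_alpha (k : ℕ) (hk : 1 ≤ k) :
    StrictMonoOn (fun x => Qint k x / Pint k x) (Set.Ico (0 : ℝ) 1) ∧
    Qint k 0 / Pint k 0 = 0 ∧
    Tendsto (fun x => Qint k x / Pint k x) (nhdsWithin 1 (Set.Iio (1 : ℝ))) atTop ∧
    (∃! x : ℝ, x ∈ Set.Ioo (0 : ℝ) 1 ∧ Qint k x = Pint k x) := by
  have hzero : Qint k 0 / Pint k 0 = 0 := by simp [Qint]
  refine ⟨(strictMonoOn_Qint_div_Pint hk).Ico_of_Ioo fun x hx => ?_, hzero,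
    tendsto_Qint_div_Pint hk, ?_⟩
  · exact hzero.trans_lt (Qint_div_Pint_mem_Ioo hk hx).1
  · refine (existsUnique_congr fun x => and_congr_right fun hx =>
      div_eq_one_iff_eq (Pint_pos hk hx).ne').1 ?_
    exact existsUnique_eq_of_strictMonoOn_Ioo (continuousOn_Qint_div_Pint hk)
      (strictMonoOn_Qint_div_Pint hk) ⟨1 / 2, by norm_num, Qint_div_Pint_half_lt_one hk⟩
      (tendsto_Qint_div_Pint hk)
end
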